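/- For all positive integers r and k, define graphs G_{r,k} recursively: G_{r,1} is a single vertex, G_{1,k} is the complete graph K_k, and for r,k ≥ 2, G_{r,k} is obtained from G_{r-1,k} by attaching to each vertex v of G_{r-1,k} a disjoint copy of G_{r,k-1} fully joined to v. Then td(G_{r,k}) ≥ C(r+k-1, r). -/

import Mathlib

open Classical

variable {V : Type}

/-- Reachability within a vertex subset `s` of the graph `G`. -/
def ReachIn (G : SimpleGraph V) (s : Finset V) (u v : V) : Prop :=
  Relation.ReflTransGen (fun a b => a ∈ s ∧ b ∈ s ∧ G.Adj a b) u v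

/-- The induced subgraph of `G` on `s` is (nonempty and) connected. -/
def ConnIn (G : SimpleGraph V) (s : Finset V) : Prop :=
  s.Nonempty ∧ ∀ u ∈ s, ∀ v ∈ s, ReachIn G s u v

/-- The vertex set of the connected component of `v` in the induced subgraph on `s`. -/
noncomputable def compIn (G : SimpleGraph V) (s : Finset V) (v : V) : Finset V :=
  s.filter (fun u => ReachIn G s v u)

/-- Fuel-based recursion computing the treedepth of the induced subgraph of `G` on `s`
(correct whenever the fuel is at least `s.card`): treedepth of the null graph is `0`;
for a connected graph it is `1 + min_v td(G - v)`; otherwise the max over components. -/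
noncomputable def tdAux (G : SimpleGraph V) : ℕ → Finset V → ℕ
  | 0, _ => 0
  | n+1, s =>
    if hs : s = ∅ then 0
    else if ConnIn G s then
      1 + s.inf' (Finset.nonempty_of_ne_empty hs) (fun v => tdAux G n (s.erase v))
    else
      s.sup (fun v => tdAux G n (compIn G s v))

/-- The treedepth of the induced subgraph of `G` on the vertex set `s`. -/
noncomputable def tdOn (G : SimpleGraph V) (s : Finset V) : ℕ := tdAux G s.card s

/-- The treedepth of a finite graph. -/
noncomputable def td (G : SimpleGraph V) [Fintype V] : ℕ := tdOn G Finset.univ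

/-- The graph of type `a(H, H')`: obtained from `H` by adding, for each vertex
`a` of `H`, a disjoint copy `{a} × B` of `H'` fully joined to `a`. -/
def typeA {A B : Type} (H : SimpleGraph A) (H' : SimpleGraph B) :
    SimpleGraph (A ⊕ A × B) where
  Adj x y := match x, y with
    | Sum.inl a, Sum.inl a' => H.Adj a a'
    | Sum.inl a, Sum.inr p => a = p.1
    | Sum.inr p, Sum.inl a => p.1 = a
    | Sum.inr p, Sum.inr q => p.1 = q.1 ∧ H'.Adj p.2 q.2
  symm := ⟨by
    rintro (a|p) (a'|q) h
    · exact H.adj_symm h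
    · exact h.symm
    · exact h.symm
    · exact ⟨h.1.symm, H'.adj_symm h.2⟩⟩
  loopless := ⟨by
    rintro (a|p) h
    · exact H.ne_of_adj h rfl
    · exact H'.ne_of_adj h.2 rfl⟩

/-- One row-step of the recursive construction: given the previous family
`prev k = G_{r, k+1}`, builds `G_{r+1, k+1}` for all `k` (index shifted by one:
`GrkRow prev 0` is the one-vertex graph `G_{r+1, 1}`, and `GrkRow prev (k+1)`
is obtained from `prev (k+1) = G_{r, k+2}` by attaching to each of its vertices
a fully-joined disjoint copy of `GrkRow prev k = G_{r+1, k+1}`). -/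
def GrkRow (prev : ℕ → (W : Type) × SimpleGraph W) : ℕ → (W : Type) × SimpleGraph W
  | 0 => ⟨PUnit, ⊥⟩
  | k+1 => ⟨(prev (k+1)).1 ⊕ ((prev (k+1)).1 × (GrkRow prev k).1),
      typeA (prev (k+1)).2 (GrkRow prev k).2⟩

/-- The graph `G_{r+1, k+1}` (indices shifted by one): `GrkS 0 k` is the complete
graph `K_{k+1}`, `GrkS (r+1) 0` is a single vertex, and `GrkS (r+1) (k+1)` is
obtained from `GrkS r (k+1)` by attaching to each vertex a fully-joined disjoint
copy of `GrkS (r+1) k`. -/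
def GrkS : ℕ → ℕ → (W : Type) × SimpleGraph W
  | 0 => fun k => ⟨Fin (k+1), ⊤⟩
  | r+1 => GrkRow (GrkS r)

noncomputable def fintypeRow (prev : ℕ → (W : Type) × SimpleGraph W)
    (hp : ∀ k, Fintype (prev k).1) : ∀ k, Fintype (GrkRow prev k).1
  | 0 => inferInstanceAs (Fintype PUnit)
  | k+1 =>
    letI := hp (k+1)
    letI := fintypeRow prev hp k
    inferInstanceAs (Fintype (_ ⊕ _ × _))

noncomputable def fintypeGrk : ∀ r k, Fintype (GrkS r k).1
  | 0 => fun k => inferInstanceAs (Fintype (Fin (k+1)))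
  | r+1 => fintypeRow (GrkS r) (fintypeGrk r)

open Finset

/-! A connected vertex set `s` certifies `td(G[s]) > d` (`TdExceeds G d s`) when deleting any
vertex of it leaves a subset certifying `> d - 1`. Certificates add up under `typeA`: deleting a
vertex of `H` uses up one level of the certificate for `H` or, at its bottom, leaves the copy of `H'`
attached to that vertex; deleting a vertex of a copy of `H'` uses up one level of the certificate
for `H'` or leaves `H`. So `G_{r,k}` carries a certificate of depth
`td(G_{r-1,k}) + td(G_{r,k-1})`, and Pascal's rule gives the binomial coefficient. -/

section Reach

variable {G : SimpleGraph V} {s s' : Finset V} {u v : V}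

lemma ReachIn.mono (hss : s ⊆ s') (h : ReachIn G s u v) : ReachIn G s' u v :=
  Relation.ReflTransGen.mono (fun _ _ ⟨ha, hb, hab⟩ => ⟨hss ha, hss hb, hab⟩) _ _ h

lemma ReachIn.symm (h : ReachIn G s u v) : ReachIn G s v u := by
  induction h with
  | refl => exact .refl
  | tail _ hbc ih => exact .head ⟨hbc.2.1, hbc.1, hbc.2.2.symm⟩ ih

lemma ReachIn.image {W : Type} {G' : SimpleGraph W} (f : G →g G') (h : ReachIn G s u v) :
    ReachIn G' (s.image f) (f u) (f v) :=
  Relation.ReflTransGen.lift f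
    (fun _ _ ⟨ha, hb, hab⟩ => ⟨mem_image_of_mem f ha, mem_image_of_mem f hb, f.map_adj hab⟩) _ _ h

lemma ConnIn.image {W : Type} {G' : SimpleGraph W} (f : G →g G') (h : ConnIn G s) :
    ConnIn G' (s.image f) := by
  refine ⟨h.1.image f, ?_⟩
  simp only [forall_mem_image]
  exact fun a ha b hb => (h.2 a ha b hb).image f

lemma connIn_singleton (v : V) : ConnIn G {v} :=
  ⟨singleton_nonempty v, by simp only [mem_singleton]; rintro _ rfl _ rfl; exact .refl⟩

lemma compIn_subset : compIn G s v ⊆ s := filter_subset _ _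

lemma mem_compIn : u ∈ compIn G s v ↔ u ∈ s ∧ ReachIn G s v u := mem_filter

lemma compIn_ssubset (hs : ¬ ConnIn G s) (hv : v ∈ s) : compIn G s v ⊂ s := by
  refine compIn_subset.ssubset_of_ne fun h => hs ⟨⟨v, hv⟩, fun x hx y hy => ?_⟩
  rw [← h, mem_compIn] at hx hy
  exact hx.2.symm.trans hy.2

end Reach

section Treedepth

variable {G : SimpleGraph V} {s : Finset V}

lemma tdAux_empty (n : ℕ) : tdAux G n ∅ = 0 := by
  cases n <;> simp [tdAux]

lemma tdAux_eq_tdOn {n : ℕ} (hs : s.card ≤ n) : tdAux G n s = tdOn G s := by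
  suffices ∀ n m (s : Finset V), s.card ≤ n → s.card ≤ m → tdAux G n s = tdAux G m s from
    this n s.card s hs le_rfl
  intro n
  induction n with
  | zero =>
    intro m s hn _
    rw [card_eq_zero.1 (Nat.le_zero.1 hn), tdAux_empty, tdAux_empty]
  | succ n ih =>
    rintro (_ | m) s hn hm
    · rw [card_eq_zero.1 (Nat.le_zero.1 hm), tdAux_empty, tdAux_empty]
    by_cases hse : s = ∅
    · rw [hse, tdAux_empty, tdAux_empty]
    rw [tdAux, tdAux, dif_neg hse, dif_neg hse]
    split_ifs with hconn
    · refine congrArg (1 + ·) (inf'_congr _ rfl fun v hv => ih m _ ?_ ?_) <;>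
        rw [card_erase_of_mem hv] <;> omega
    · refine sup_congr rfl fun v hv => ih m _ ?_ ?_ <;>
        have := card_lt_card (compIn_ssubset hconn hv) <;> omega

lemma tdOn_of_connIn (hconn : ConnIn G s) :
    tdOn G s = 1 + s.inf' hconn.1 (fun v => tdOn G (s.erase v)) := by
  rw [← tdAux_eq_tdOn (Nat.le_succ s.card), tdAux, dif_neg hconn.1.ne_empty, if_pos hconn]
  exact congrArg (1 + ·) (inf'_congr _ rfl fun v _ => tdAux_eq_tdOn (card_erase_le))

lemma tdOn_of_not_connIn (hconn : ¬ ConnIn G s) :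
    tdOn G s = s.sup (fun v => tdOn G (compIn G s v)) := by
  rw [← tdAux_eq_tdOn (Nat.le_succ s.card), tdAux]
  split_ifs with hse
  · simp [hse]
  · exact sup_congr rfl fun v _ => tdAux_eq_tdOn (card_le_card compIn_subset)

end Treedepth

def TdExceeds (G : SimpleGraph V) : ℕ → Finset V → Prop
  | 0, s => ConnIn G s
  | d+1, s => ConnIn G s ∧ ∀ v ∈ s, ∃ t ⊆ s.erase v, TdExceeds G d t

namespace TdExceeds

variable {G : SimpleGraph V} {d : ℕ} {s : Finset V}

lemma connIn (h : TdExceeds G d s) : ConnIn G s := by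
  cases d with
  | zero => exact h
  | succ d => exact h.1

lemma lt_tdOn {u : Finset V} (h : TdExceeds G d s) (hsu : s ⊆ u) : d < tdOn G u := by
  induction u using Finset.strongInduction generalizing d s with
  | _ u ih =>
  obtain ⟨w, hw⟩ := h.connIn.1
  by_cases hconn : ConnIn G u
  · rw [tdOn_of_connIn hconn, Nat.lt_one_add_iff]
    refine le_inf' _ _ fun v hv => ?_
    by_cases hvs : v ∈ s
    · cases d with
      | zero => exact Nat.zero_le _
      | succ d =>
        obtain ⟨t, hts, ht⟩ := h.2 v hvs
        exact ih _ (erase_ssubset hv) ht (hts.trans (erase_subset_erase v hsu))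
    · exact (ih _ (erase_ssubset hv) h (subset_erase.2 ⟨hsu, hvs⟩)).le
  · rw [tdOn_of_not_connIn hconn]
    have hs_comp : s ⊆ compIn G u w := fun x hx =>
      mem_compIn.2 ⟨hsu hx, (h.connIn.2 w hw x hx).mono hsu⟩
    exact (ih _ (compIn_ssubset hconn (hsu hw)) h hs_comp).trans_le
      (le_sup (f := fun v => tdOn G (compIn G u v)) (hsu hw))

lemma lt_td [Fintype V] (h : TdExceeds G d s) : d < td G :=
  h.lt_tdOn (subset_univ s)

lemma image {W : Type} {G' : SimpleGraph W} (f : G →g G') (hf : Function.Injective f)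
    (h : TdExceeds G d s) : TdExceeds G' d (s.image f) := by
  induction d generalizing s with
  | zero => exact h.image f
  | succ d ih =>
    refine ⟨h.1.image f, ?_⟩
    simp only [forall_mem_image]
    intro v hv
    obtain ⟨t, hts, ht⟩ := h.2 v hv
    exact ⟨t.image f, (image_subset_image hts).trans (image_erase hf s v).le, ih ht⟩

end TdExceeds

lemma connIn_top {s : Finset V} (hs : s.Nonempty) : ConnIn ⊤ s := by
  refine ⟨hs, fun u hu v hv => ?_⟩
  rcases eq_or_ne u v with rfl | huv
  · exact .refl
  · exact .single ⟨hu, hv, huv⟩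

lemma tdExceeds_top {d : ℕ} {s : Finset V} (hs : d < s.card) : TdExceeds ⊤ d s := by
  induction d generalizing s with
  | zero => exact connIn_top (card_pos.1 hs)
  | succ d ih =>
    refine ⟨connIn_top (card_pos.1 (by omega)), fun v hv => ⟨s.erase v, subset_rfl, ih ?_⟩⟩
    rw [card_erase_of_mem hv]
    omega

section TypeA

variable {A B : Type} {H : SimpleGraph A} {H' : SimpleGraph B}

@[simps]
def typeA.inlHom : H →g typeA H H' := ⟨Sum.inl, id⟩

@[simps]
def typeA.copyHom (a : A) : H' →g typeA H H' := ⟨fun b => .inr (a, b), fun h => ⟨rfl, h⟩⟩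

lemma connIn_typeA {s : Finset A} (t : Finset B) (hs : ConnIn H s) :
    ConnIn (typeA H H') (s.disjSum (s ×ˢ t)) := by
  obtain ⟨a₀, ha₀⟩ := hs.1
  have to_base : ∀ x ∈ s.disjSum (s ×ˢ t),
      ∃ a ∈ s, ReachIn (typeA H H') (s.disjSum (s ×ˢ t)) x (.inl a) := by
    rintro (a | ⟨a, b⟩) hx
    · exact ⟨a, inl_mem_disjSum.1 hx, .refl⟩
    · have ha : a ∈ s := (mem_product.1 (inr_mem_disjSum.1 hx)).1
      exact ⟨a, ha, .single ⟨hx, inl_mem_disjSum.2 ha, rfl⟩⟩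
  refine ⟨⟨.inl a₀, inl_mem_disjSum.2 ha₀⟩, fun x hx y hy => ?_⟩
  obtain ⟨a, ha, hxa⟩ := to_base x hx
  obtain ⟨a', ha', hya'⟩ := to_base y hy
  have hbase : ReachIn (typeA H H') (s.disjSum (s ×ˢ t)) (.inl a) (.inl a') :=
    Relation.ReflTransGen.lift Sum.inl (fun _ _ ⟨hb, hc, hbc⟩ =>
      ⟨inl_mem_disjSum.2 hb, inl_mem_disjSum.2 hc, hbc⟩) _ _ (hs.2 a ha a' ha')
  exact (hxa.trans hbase).trans hya'.symm

lemma tdExceeds_typeA {d e : ℕ} {s : Finset A} {t : Finset B} (hs : TdExceeds H d s)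
    (ht : TdExceeds H' e t) : TdExceeds (typeA H H') (d + e + 1) (s.disjSum (s ×ˢ t)) := by
  refine ⟨connIn_typeA t hs.connIn, ?_⟩
  rintro (a | ⟨a, b⟩) hv
  · have ha : a ∈ s := inl_mem_disjSum.1 hv
    cases d with
    | zero =>
      have hcopy := ht.image (typeA.copyHom (H := H) a)
        fun _ _ h => (Prod.mk.inj (Sum.inr_injective h)).2
      refine ⟨_, ?_, by rwa [zero_add]⟩
      simp [subset_iff, ha]
    | succ d =>
      obtain ⟨s', hs's, hs'⟩ := hs.2 a ha
      refine ⟨_, ?_, by simpa only [add_right_comm] using tdExceeds_typeA hs' ht⟩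
      rintro (x | ⟨x, c⟩) hx <;> simp at hx ⊢ <;> grind
  · have hb : a ∈ s ∧ b ∈ t := mem_product.1 (inr_mem_disjSum.1 hv)
    cases e with
    | zero =>
      refine ⟨_, ?_, hs.image typeA.inlHom Sum.inl_injective⟩
      simp [subset_iff]
    | succ e =>
      obtain ⟨t', ht't, ht'⟩ := ht.2 b hb.2
      refine ⟨_, ?_, by simpa only [add_assoc] using tdExceeds_typeA hs ht'⟩
      rintro (x | ⟨x, c⟩) hx <;> simp at hx ⊢ <;> grind
termination_by d + e

end TypeA

lemma exists_tdExceeds_GrkS (r k : ℕ) :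
    ∃ d s, TdExceeds (GrkS r k).2 d s ∧ (r + k + 1).choose (r + 1) ≤ d + 1 := by
  induction r generalizing k with
  | zero =>
    have hcard : k < (univ : Finset (Fin (k + 1))).card := by simp
    exact ⟨k, _, tdExceeds_top hcard, by simp⟩
  | succ r ihr =>
    induction k with
    | zero => exact ⟨0, {PUnit.unit}, connIn_singleton _, by simp⟩
    | succ k ihk =>
      obtain ⟨d, s, hs, hd⟩ := ihr (k + 1)
      obtain ⟨e, t, ht, he⟩ := ihk
      refine ⟨d + e + 1, _, tdExceeds_typeA hs ht, ?_⟩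
      have pascal := Nat.choose_succ_succ' (r + k + 2) (r + 1)
      rw [show r + 1 + (k + 1) + 1 = r + k + 2 + 1 by omega]
      rw [show r + (k + 1) + 1 = r + k + 2 by omega] at hd
      rw [show r + 1 + k + 1 = r + k + 2 by omega] at he
      omega

/-- `td(G_{r,k}) ≥ C(r+k-1, r)` for all `r, k ≥ 1`; here `GrkS r k` is
`G_{r+1, k+1}`, so the bound reads `C(r+k+1, r+1)`. -/
theorem td_Grk (r k : ℕ) :
    Nat.choose (r + k + 1) (r + 1) ≤ @td _ (GrkS r k).2 (fintypeGrk r k) := by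
  obtain ⟨d, s, hs, hd⟩ := exists_tdExceeds_GrkS r k
  exact hd.trans (@TdExceeds.lt_td _ _ _ _ (fintypeGrk r k) hs)
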